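/- arXiv:1809.00919 — 5 statements merged into one kernel-verified Lean document; each statement's English description precedes it below -/
import Mathlib

section
/- For every graph H that is not a forest, and every ε > 0, there exists an H-free graph G with |G| > 1 such that every vertex of G has degree less than ε|G| and there are no two disjoint anticomplete vertex subsets each of size at least ε|G|. Equivalently: if for some ε > 0 every ε-coherent graph contains H as an induced subgraph, then H is a forest. -/
open Finset

open scoped Classical

variable {V : Type*}

/-- No edges between `A` and `B`. -/
def Anticomplete (G : SimpleGraph V) (A B : Finset V) : Prop :=
  ∀ a ∈ A, ∀ b ∈ B, ¬ G.Adj a b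

/-- All edges between `A` and `B` are present. -/
def CompletePair (G : SimpleGraph V) (A B : Finset V) : Prop :=
  ∀ a ∈ A, ∀ b ∈ B, G.Adj a b

/-- `G` is `ε`-coherent. -/
def Coherent (G : SimpleGraph V) [Fintype V] (ε : ℝ) : Prop :=
  1 < Fintype.card V ∧
  (∀ v : V, (G.degree v : ℝ) < ε * Fintype.card V) ∧
  ¬ ∃ A B : Finset V, Disjoint A B ∧ Anticomplete G A B ∧
      ε * Fintype.card V ≤ A.card ∧ ε * Fintype.card V ≤ B.card

/-- `G` contains an induced copy of `H`. -/
def Contains {W : Type*} (G : SimpleGraph V) (H : SimpleGraph W) : Prop :=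
  ∃ f : W ↪ V, ∀ a b, G.Adj (f a) (f b) ↔ H.Adj a b

/-- Size of the largest clique. -/
noncomputable def cliqueNumber (G : SimpleGraph V) [Fintype V] : ℕ :=
  sSup {n | ∃ s : Finset V, G.IsNClique n s}

/-- A blockade: pairwise disjoint nonempty blocks. -/
def IsBlockade {K : ℕ} (B : Fin K → Finset V) : Prop :=
  (∀ i, (B i).Nonempty) ∧ Pairwise fun i j => Disjoint (B i) (B j)

/-- Width of a blockade: minimum block size. -/
noncomputable def blockWidth {K : ℕ} (B : Fin K → Finset V) : ℕ :=
  ⨅ i, (B i).card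

/-- A rainbow copy of the ordered graph `J` with blocks given by the strictly
monotone map `ι`. -/
def RainbowCopy (G : SimpleGraph V) {K : ℕ} (B : Fin K → Finset V) {m : ℕ}
    (J : SimpleGraph (Fin m)) (ι : Fin m → Fin K) : Prop :=
  StrictMono ι ∧ ∃ f : Fin m → V, (∀ a, f a ∈ B (ι a)) ∧
    ∀ a b, G.Adj (f a) (f b) ↔ J.Adj a b

/-- The trace of the ordered graph `J` relative to a blockade. -/
def Trace (G : SimpleGraph V) {K : ℕ} (B : Fin K → Finset V) {m : ℕ}
    (J : SimpleGraph (Fin m)) : Set (Fin m → Fin K) :=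
  {ι | RainbowCopy G B J ι}

/-- `τ`-support-uniform: for every ordered tree with at most `τ` vertices, the
trace is empty or everything. -/
def SupportUniform (G : SimpleGraph V) {K : ℕ} (B : Fin K → Finset V) (τ : ℕ) : Prop :=
  ∀ m : ℕ, m ≤ τ → ∀ J : SimpleGraph (Fin m), J.IsTree →
    Trace G B J = ∅ ∨ Trace G B J = {ι | StrictMono ι}

/-- `B'` is a contraction of `B`. -/
def IsContraction {K : ℕ} (B' B : Fin K → Finset V) : Prop :=
  ∀ i, (B' i).Nonempty ∧ B' i ⊆ B i

/-- `(κ, τ)`-support-invariant: contractions of width at least `κ` times the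
width have the same traces of ordered trees with at most `τ` vertices. -/
def SupportInvariant (G : SimpleGraph V) {K : ℕ} (B : Fin K → Finset V)
    (κ : ℝ) (τ : ℕ) : Prop :=
  ∀ B' : Fin K → Finset V, IsContraction B' B →
    (∀ i, κ * blockWidth B ≤ ((B' i).card : ℝ)) →
    ∀ m : ℕ, m ≤ τ → ∀ J : SimpleGraph (Fin m), J.IsTree →
      Trace G B' J = Trace G B J

/-- `X` `lam`-covers the block `Bi` (with respect to width `w`). -/
def Covers (G : SimpleGraph V) (X Bi : Finset V) (lam : ℝ) (w : ℕ) : Prop :=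
  lam * w ≤ ((Bi.filter fun v => ∃ x ∈ X, G.Adj x v).card : ℝ)

/-- `X` `lam`-misses the block `Bi` (with respect to width `w`). -/
def Misses (G : SimpleGraph V) (X Bi : Finset V) (lam : ℝ) (w : ℕ) : Prop :=
  lam * w ≤ ((Bi.filter fun v => ∀ x ∈ X, ¬ G.Adj x v).card : ℝ)

/-- `lam`-concave (for an equicardinal blockade of width `w`). -/
def Concave (G : SimpleGraph V) {K : ℕ} (B : Fin K → Finset V) (lam : ℝ) (w : ℕ) : Prop :=
  ∀ h1 h2 h3 : Fin K, h1 < h2 → h2 < h3 →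
    ∀ X : Finset V,
      (∀ x ∈ X, ∃ i : Fin K, i ≠ h1 ∧ i ≠ h2 ∧ i ≠ h3 ∧ x ∈ B i) →
      ¬ (Covers G X (B h2) lam w ∧ Misses G X (B h1) lam w ∧ Misses G X (B h3) lam w)

/-- `G` contains a `B`-rainbow induced copy of `T`. -/
def RainbowContains (G : SimpleGraph V) {K : ℕ} (B : Fin K → Finset V)
    {W' : Type*} (T : SimpleGraph W') : Prop :=
  ∃ f : W' ↪ V,
    (∀ a b, G.Adj (f a) (f b) ↔ T.Adj a b) ∧
    (∀ a, ∃ i, f a ∈ B i) ∧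
    ∀ a b, a ≠ b → ∀ i, f a ∈ B i → f b ∉ B i

/-- Vertices of the tree `T(δ, η)`: sequences of length at most `η` over `Fin δ`. -/
def Tvert (δ η : ℕ) : Type := {l : List (Fin δ) // l.length ≤ η}

/-- The tree `T(δ, η)` rooted at the empty sequence: every vertex of depth
`< η` has exactly `δ` children, and all leaves are at depth exactly `η`. -/
def Ttree (δ η : ℕ) : SimpleGraph (Tvert δ η) :=
  SimpleGraph.fromRel fun a b => ∃ x : Fin δ, b.1 = x :: a.1

/-!
Model `G(n, 1/M)` with `n = d M` by counting colourings of the pairs of vertices with `M` colours,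
a pair being an edge when it gets the colour `c₀`. A fixed cycle of length `ℓ` survives with
probability `M ^ (-ℓ)`, so the expected number of vertices on cycles of length at most `k` is
`O(k² dᵏ)`, independently of `M`. On the other hand, a vertex has `m ≈ εn/2` neighbours with
probability at most `2ⁿ M^(-m)`, and two disjoint `m`-sets span no edge with probability at most
`(1 - 1/M)^(m²) ≤ 2^(-m²/M)`; both beat the `n 2ⁿ`, resp. `4ⁿ`, choices once `d ≥ 16/ε²` and
`M` is large. Isolating the few vertices on short cycles of a typical outcome leaves an
`ε`-coherent graph with no cycle of length at most `|H|`, whereas a graph that is not a forest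
contains such a cycle.
-/

open SimpleGraph

section Counting

variable {α β : Type*} [Fintype α] [DecidableEq α] [Fintype β] [DecidableEq β]

-- Multiplied by `card β ^ #S` so that no truncated subtraction `card α - #S` appears.
lemma card_filter_forall_mem_mul_pow (S : Finset α) (t : Finset β) :
    #{f : α → β | ∀ a ∈ S, f a ∈ t} * Fintype.card β ^ #S =
      #t ^ #S * Fintype.card β ^ Fintype.card α := by
  have hpi : ({f : α → β | ∀ a ∈ S, f a ∈ t} : Finset (α → β)) =
      Fintype.piFinset fun a => if a ∈ S then t else univ := by
    ext f
    simp only [mem_filter, mem_univ, true_and, Fintype.mem_piFinset]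
    exact ⟨fun h a => by split_ifs with ha <;> simp [h a, ha],
      fun h a ha => by simpa [ha] using h a⟩
  rw [hpi, Fintype.card_piFinset, prod_apply_ite, prod_const, prod_const, card_univ, mul_assoc,
    ← pow_add, filter_mem_eq_inter, univ_inter, filter_not, filter_mem_eq_inter, univ_inter,
    card_sdiff_add_card_eq_card (subset_univ S), card_univ]

variable {κ : Type*} [Fintype κ] [DecidableEq κ]

lemma card_filter_forall_eq_mul_pow (c₀ : κ) (S : Finset α) :
    #{f : α → κ | ∀ a ∈ S, f a = c₀} * Fintype.card κ ^ #S =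
      Fintype.card κ ^ Fintype.card α := by
  simpa using card_filter_forall_mem_mul_pow S {c₀}

lemma card_filter_forall_ne_mul_pow (c₀ : κ) (S : Finset α) :
    #{f : α → κ | ∀ a ∈ S, f a ≠ c₀} * Fintype.card κ ^ #S =
      (Fintype.card κ - 1) ^ #S * Fintype.card κ ^ Fintype.card α := by
  simpa [card_erase_of_mem] using card_filter_forall_mem_mul_pow S (univ.erase c₀)

lemma card_mul_le_of_subset_biUnion {ι γ : Type*} {s : Finset γ} {I : Finset ι}
    {F : ι → Finset γ} {a b : ℕ} (hs : s ⊆ I.biUnion F) (hF : ∀ i ∈ I, #(F i) * a ≤ b) :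
    #s * a ≤ #I * b :=
  calc #s * a ≤ (∑ i ∈ I, #(F i)) * a :=
        Nat.mul_le_mul_right a ((card_le_card hs).trans card_biUnion_le)
    _ = ∑ i ∈ I, #(F i) * a := sum_mul ..
    _ ≤ #I * b := by simpa using sum_le_sum hF

lemma four_mul_lt_of_mul_le {s a b c : ℕ} (h : s * a ≤ b * c) (hb : 4 * b < a) (hc : 0 < c) :
    4 * s < c :=
  Nat.lt_of_mul_lt_mul_right (a := a) (by nlinarith)

end Counting

section RandomGraph

variable {κ : Type*} [Fintype V] [Fintype κ]

def colorGraph (c₀ : κ) (f : Sym2 V → κ) : SimpleGraph V := fromEdgeSet {e | f e = c₀}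

noncomputable def copyFinset {α : Type*} [Fintype α] (A : SimpleGraph α) (G : SimpleGraph V) :
    Finset (α → V) :=
  {c | Function.Injective c ∧ ∀ a b, A.Adj a b → G.Adj (c a) (c b)}

lemma mem_copyFinset {α : Type*} [Fintype α] {A : SimpleGraph α} {G : SimpleGraph V}
    {c : α → V} :
    c ∈ copyFinset A G ↔ Function.Injective c ∧ ∀ a b, A.Adj a b → G.Adj (c a) (c b) := by
  simp [copyFinset]

variable [DecidableEq κ]

lemma card_filter_mem_copyFinset_mul_pow_le {α : Type*} [Fintype α] (c₀ : κ)
    (A : SimpleGraph α) [DecidableRel A.Adj] (c : α → V) :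
    #{f : Sym2 V → κ | c ∈ copyFinset A (colorGraph c₀ f)} * Fintype.card κ ^ #A.edgeFinset ≤
      Fintype.card κ ^ Fintype.card (Sym2 V) := by
  by_cases hc : Function.Injective c
  · let S := A.edgeFinset.map ⟨Sym2.map c, Sym2.map.injective hc⟩
    have hsub : ({f | c ∈ copyFinset A (colorGraph c₀ f)} : Finset (Sym2 V → κ)) ⊆
        ({f | ∀ e ∈ S, f e = c₀} : Finset (Sym2 V → κ)) := by
      intro f hf
      replace hf := mem_copyFinset.mp (mem_filter.mp hf).2
      refine mem_filter.mpr ⟨mem_univ _, ?_⟩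
      simp only [S, mem_map, mem_edgeFinset, Function.Embedding.coeFn_mk, forall_exists_index,
        and_imp]
      rintro _ e he rfl
      induction e with | h a b => exact ((fromEdgeSet_adj _).mp (hf.2 a b he)).1
    calc _ ≤ #{f : Sym2 V → κ | ∀ e ∈ S, f e = c₀} * Fintype.card κ ^ #S := by
          rw [card_map]; exact Nat.mul_le_mul_right _ (card_le_card hsub)
      _ = _ := card_filter_forall_eq_mul_pow c₀ S
  · rw [filter_false_of_mem fun f _ hf => hc (mem_copyFinset.mp hf).1, card_empty, zero_mul]
    exact Nat.zero_le _

lemma sum_card_copyFinset_mul_pow_le {α : Type*} [Fintype α] (c₀ : κ) (A : SimpleGraph α)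
    [DecidableRel A.Adj] :
    (∑ f : Sym2 V → κ, #(copyFinset A (colorGraph c₀ f))) * Fintype.card κ ^ #A.edgeFinset ≤
      Fintype.card V ^ Fintype.card α * Fintype.card κ ^ Fintype.card (Sym2 V) := by
  have hswap : ∑ f : Sym2 V → κ, #(copyFinset A (colorGraph c₀ f)) =
      ∑ c : α → V, #{f : Sym2 V → κ | c ∈ copyFinset A (colorGraph c₀ f)} := by
    simp only [card_filter, sum_comm (γ := α → V)]
    simp only [sum_ite_mem, univ_inter, sum_const, smul_eq_mul, mul_one]
  rw [hswap, sum_mul]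
  calc _ ≤ ∑ _c : α → V, Fintype.card κ ^ Fintype.card (Sym2 V) :=
        sum_le_sum fun c _ => card_filter_mem_copyFinset_mul_pow_le c₀ A c
    _ = _ := by simp

lemma card_filter_exists_le_degree_mul_pow_le (c₀ : κ) (m : ℕ) :
    #{f : Sym2 V → κ | ∃ v, m ≤ (colorGraph c₀ f).degree v} * Fintype.card κ ^ m ≤
      Fintype.card V * 2 ^ Fintype.card V * Fintype.card κ ^ Fintype.card (Sym2 V) := by
  let I : Finset (V × Finset V) := univ ×ˢ powersetCard m univ
  let star (p : V × Finset V) : Finset (Sym2 V) := p.2.image fun w => s(p.1, w)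
  calc _ ≤ #I * Fintype.card κ ^ Fintype.card (Sym2 V) := by
        refine card_mul_le_of_subset_biUnion
          (F := fun p => ({f | ∀ e ∈ star p, f e = c₀} : Finset (Sym2 V → κ))) ?_ ?_
        · intro f hf
          obtain ⟨v, hv⟩ := (mem_filter.mp hf).2
          rw [← card_neighborFinset_eq_degree] at hv
          obtain ⟨S, hS, rfl⟩ := exists_subset_card_eq hv
          simp only [I, star, mem_biUnion, mem_product, mem_univ, mem_powersetCard, subset_univ,
            true_and, mem_filter, forall_mem_image]
          refine ⟨(v, S), rfl, fun w hw => ?_⟩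
          have hadj : (colorGraph c₀ f).Adj v w := by simpa using hS hw
          exact ((fromEdgeSet_adj _).mp hadj).1
        · rintro ⟨v, S⟩ hS
          rw [mem_product, mem_powersetCard] at hS
          rw [← hS.2.2, ← card_image_of_injective S fun _ _ h => Sym2.congr_right.mp h]
          exact (card_filter_forall_eq_mul_pow c₀ _).le
    _ ≤ _ := by
        rw [card_product, card_powersetCard, card_univ]
        gcongr
        exact Nat.choose_le_two_pow _ _

lemma card_filter_exists_anticomplete_mul_pow_le (c₀ : κ) (m : ℕ) :
    #{f : Sym2 V → κ | ∃ A B : Finset V, Disjoint A B ∧ #A = m ∧ #B = m ∧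
        Anticomplete (colorGraph c₀ f) A B} * Fintype.card κ ^ (m * m) ≤
      2 ^ Fintype.card V * 2 ^ Fintype.card V * (Fintype.card κ - 1) ^ (m * m) *
        Fintype.card κ ^ Fintype.card (Sym2 V) := by
  let I : Finset (Finset V × Finset V) := {p | Disjoint p.1 p.2 ∧ #p.1 = m ∧ #p.2 = m}
  let edges (p : Finset V × Finset V) : Finset (Sym2 V) :=
    (p.1 ×ˢ p.2).image fun x => s(x.1, x.2)
  have hedges : ∀ p ∈ I, #(edges p) = m * m := by
    rintro ⟨A, B⟩ hp
    simp only [I, mem_filter, mem_univ, true_and] at hp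
    rw [card_image_of_injOn, card_product, hp.2.1, hp.2.2]
    rintro ⟨a, b⟩ hab ⟨a', b'⟩ hab' h
    simp only [coe_product, Set.mem_prod, mem_coe] at hab hab'
    rcases Sym2.eq_iff.mp h with ⟨rfl, rfl⟩ | ⟨rfl, rfl⟩
    · rfl
    · exact absurd hab'.2 (disjoint_left.mp hp.1 hab.1)
  calc _ ≤ #I * ((Fintype.card κ - 1) ^ (m * m) * Fintype.card κ ^ Fintype.card (Sym2 V)) := by
        refine card_mul_le_of_subset_biUnion
          (F := fun p => ({f | ∀ e ∈ edges p, f e ≠ c₀} : Finset (Sym2 V → κ))) ?_ ?_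
        · intro f hf
          obtain ⟨A, B, hAB, hA, hB, hanti⟩ := (mem_filter.mp hf).2
          simp only [mem_biUnion, mem_filter, mem_univ, true_and, I, edges, forall_mem_image,
            mem_product, Prod.forall]
          refine ⟨(A, B), ⟨hAB, hA, hB⟩, fun a b hab hf =>
            hanti a hab.1 b hab.2 ((fromEdgeSet_adj _).mpr ⟨hf, ?_⟩)⟩
          rintro rfl
          exact disjoint_left.mp hAB hab.1 hab.2
        · intro p hp
          rw [← hedges p hp]
          exact (card_filter_forall_ne_mul_pow c₀ _).le
    _ ≤ _ := by
        rw [← mul_assoc]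
        gcongr
        calc #I ≤ #(univ : Finset (Finset V × Finset V)) := card_le_univ _
          _ = _ := by simp [Fintype.card_finset]

end RandomGraph

section Deletion

variable {α : Type*}

noncomputable def isolate (G : SimpleGraph V) (T : Set V) : SimpleGraph V :=
  ((⊤ : G.Subgraph).deleteVerts T).spanningCoe

lemma isolate_adj {G : SimpleGraph V} {T : Set V} {u v : V} :
    (isolate G T).Adj u v ↔ G.Adj u v ∧ u ∉ T ∧ v ∉ T := by
  simp only [isolate, Subgraph.spanningCoe_adj, Subgraph.deleteVerts_adj, Subgraph.top_adj]
  tauto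

lemma isolate_le (G : SimpleGraph V) (T : Set V) : isolate G T ≤ G :=
  Subgraph.spanningCoe_le _

lemma free_isolate [Fintype V] [Fintype α] {A : SimpleGraph α} (hA : A ≠ ⊥)
    {G : SimpleGraph V} {T : Set V} (hT : ∀ c ∈ copyFinset A G, ∀ a, c a ∈ T) :
    A.Free (isolate G T) := by
  rintro ⟨φ⟩
  obtain ⟨a, b, hab⟩ := ne_bot_iff_exists_adj.mp hA
  have hφ : ⇑φ ∈ copyFinset A G :=
    mem_copyFinset.mpr ⟨φ.injective, fun a b h => isolate_le G T (φ.toHom.map_adj h)⟩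
  exact (isolate_adj.mp (φ.toHom.map_adj hab)).2.1 (hT _ hφ a)

lemma coherent_isolate [Fintype V] {G : SimpleGraph V} {T : Finset V} {m : ℕ} {ε : ℝ}
    (hV : 1 < Fintype.card V) (hdeg : ∀ v, G.degree v < m)
    (hanti : ∀ A B : Finset V, Disjoint A B → #A = m → #B = m → ¬Anticomplete G A B)
    (hmT : (m + #T : ℝ) ≤ ε * Fintype.card V) : Coherent (isolate G T) ε := by
  refine ⟨hV, fun v => ?_, ?_⟩
  · calc ((isolate G T).degree v : ℝ) ≤ G.degree v := by
          exact_mod_cast degree_le_of_le (isolate_le G T)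
      _ < m := by exact_mod_cast hdeg v
      _ ≤ ε * Fintype.card V := by linarith [(#T).cast_nonneg (α := ℝ)]
  · rintro ⟨A, B, hAB, hantiAB, hA, hB⟩
    have large : ∀ X : Finset V, ε * Fintype.card V ≤ #X → m ≤ #(X \ T) := fun X hX => by
      have : (#X : ℝ) ≤ #(X \ T) + #T := by exact_mod_cast card_le_card_sdiff_add_card
      exact_mod_cast (show (m : ℝ) ≤ #(X \ T) by linarith)
    obtain ⟨A', hA', hA'm⟩ := exists_subset_card_eq (large A hA)
    obtain ⟨B', hB', hB'm⟩ := exists_subset_card_eq (large B hB)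
    refine hanti A' B' (hAB.mono (hA'.trans sdiff_subset) (hB'.trans sdiff_subset)) hA'm hB'm ?_
    intro a ha b hb hab
    refine hantiAB a (sdiff_subset (hA' ha)) b (sdiff_subset (hB' hb))
      (isolate_adj.mpr ⟨hab, ?_, ?_⟩)
    · exact mem_coe.not.mpr (mem_sdiff.mp (hA' ha)).2
    · exact mem_coe.not.mpr (mem_sdiff.mp (hB' hb)).2

end Deletion

section Cycles

lemma card_edgeFinset_cycleGraph {ℓ : ℕ} (hℓ : 3 ≤ ℓ) : #(cycleGraph ℓ).edgeFinset = ℓ := by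
  obtain ⟨n, rfl⟩ := Nat.exists_eq_add_of_le' hℓ
  have h := sum_degrees_eq_twice_card_edges (cycleGraph (n + 3))
  simp only [cycleGraph_degree_three_le, sum_const, card_univ, Fintype.card_fin, smul_eq_mul] at h
  omega

lemma cycleGraph_ne_bot {ℓ : ℕ} (hℓ : 3 ≤ ℓ) : cycleGraph ℓ ≠ ⊥ := by
  rw [Ne, ← edgeFinset_eq_empty, ← card_eq_zero, card_edgeFinset_cycleGraph hℓ]
  omega

lemma exists_cycleGraph_isContained {W : Type*} [Fintype W] {H : SimpleGraph W}
    (hH : ¬H.IsAcyclic) : ∃ ℓ, 3 ≤ ℓ ∧ ℓ ≤ Fintype.card W ∧ cycleGraph ℓ ⊑ H := by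
  simp only [isAcyclic_iff_free_cycleGraph, not_forall, not_not] at hH
  obtain ⟨ℓ, hℓ, ⟨φ⟩⟩ := hH
  exact ⟨ℓ, hℓ, by simpa using Fintype.card_le_of_injective φ φ.injective, ⟨φ⟩⟩

lemma Contains.isContained {W : Type*} {G : SimpleGraph V} {H : SimpleGraph W}
    (h : Contains G H) : H ⊑ G := by
  obtain ⟨f, hf⟩ := h
  exact ⟨⟨⟨f, (hf _ _).mpr⟩, f.injective⟩⟩

variable [Fintype V]

noncomputable def shortCycleVerts (G : SimpleGraph V) (k : ℕ) : Finset V :=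
  (Icc 3 k).biUnion fun ℓ => (copyFinset (cycleGraph ℓ) G).biUnion fun c => univ.image c

lemma card_shortCycleVerts_le (G : SimpleGraph V) (k : ℕ) :
    #(shortCycleVerts G k) ≤ ∑ ℓ ∈ Icc 3 k, ℓ * #(copyFinset (cycleGraph ℓ) G) := by
  refine card_biUnion_le.trans (sum_le_sum fun ℓ _ => card_biUnion_le.trans ?_)
  calc _ ≤ ∑ _c ∈ copyFinset (cycleGraph ℓ) G, ℓ :=
        sum_le_sum fun c _ => card_image_le.trans (by simp)
    _ = _ := by rw [sum_const, smul_eq_mul, mul_comm]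

lemma cycleGraph_free_isolate_shortCycleVerts (G : SimpleGraph V) {k ℓ : ℕ} (h3 : 3 ≤ ℓ)
    (hk : ℓ ≤ k) : (cycleGraph ℓ).Free (isolate G (shortCycleVerts G k)) :=
  free_isolate (cycleGraph_ne_bot h3) fun c hc a => mem_biUnion.mpr
    ⟨ℓ, mem_Icc.mpr ⟨h3, hk⟩, mem_biUnion.mpr ⟨c, hc, mem_image_of_mem c (mem_univ a)⟩⟩

end Cycles

section Construction

variable {κ : Type*} [Fintype V] [Fintype κ]

lemma sum_card_copyFinset_cycleGraph_le (c₀ : κ) {d ℓ : ℕ}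
    (hV : Fintype.card V = d * Fintype.card κ) (hℓ : 3 ≤ ℓ) :
    ∑ f : Sym2 V → κ, #(copyFinset (cycleGraph ℓ) (colorGraph c₀ f)) ≤
      d ^ ℓ * Fintype.card κ ^ Fintype.card (Sym2 V) := by
  have h := sum_card_copyFinset_mul_pow_le (V := V) c₀ (cycleGraph ℓ)
  rw [card_edgeFinset_cycleGraph hℓ, Fintype.card_fin, hV, mul_pow, mul_right_comm] at h
  exact Nat.le_of_mul_le_mul_right h (pow_pos (Fintype.card_pos_iff.mpr ⟨c₀⟩) ℓ)

lemma two_mul_card_many_shortCycleVerts_lt (c₀ : κ) {d k Q : ℕ}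
    (hV : Fintype.card V = d * Fintype.card κ) (hd : 1 ≤ d) (hQ : 2 * (k * k * d ^ k) ≤ Q) :
    2 * #{f : Sym2 V → κ | Q < #(shortCycleVerts (colorGraph c₀ f) k)} <
      Fintype.card κ ^ Fintype.card (Sym2 V) := by
  set N := Fintype.card κ ^ Fintype.card (Sym2 V)
  set X := fun f : Sym2 V → κ =>
    ∑ ℓ ∈ Icc 3 k, ℓ * #(copyFinset (cycleGraph ℓ) (colorGraph c₀ f))
  have hN : 0 < N := pow_pos (Fintype.card_pos_iff.mpr ⟨c₀⟩) _
  have hmean : ∑ f, X f ≤ k * k * d ^ k * N :=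
    calc ∑ f, X f = ∑ ℓ ∈ Icc 3 k,
          ℓ * ∑ f : Sym2 V → κ, #(copyFinset (cycleGraph ℓ) (colorGraph c₀ f)) := by
          simp only [X, mul_sum]; exact sum_comm
      _ ≤ ∑ ℓ ∈ Icc 3 k, k * (d ^ k * N) := by
          refine sum_le_sum fun ℓ hℓ => ?_
          rw [mem_Icc] at hℓ
          exact Nat.mul_le_mul hℓ.2 ((sum_card_copyFinset_cycleGraph_le c₀ hV hℓ.1).trans
            (Nat.mul_le_mul_right _ (Nat.pow_le_pow_right hd hℓ.2)))
      _ ≤ k * (k * (d ^ k * N)) := by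
          rw [sum_const, smul_eq_mul, Nat.card_Icc]; exact Nat.mul_le_mul_right _ (by omega)
      _ = _ := by ring
  have hmarkov :
      #{f : Sym2 V → κ | Q < #(shortCycleVerts (colorGraph c₀ f) k)} * (Q + 1) ≤ ∑ f, X f :=
    calc _ ≤ ∑ f ∈ {f : Sym2 V → κ | Q < #(shortCycleVerts (colorGraph c₀ f) k)}, X f := by
          rw [← smul_eq_mul]
          exact card_nsmul_le_sum _ _ _ fun f hf =>
            (mem_filter.mp hf).2.trans_le (card_shortCycleVerts_le _ k)
      _ ≤ _ := sum_le_sum_of_subset (subset_univ _)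
  nlinarith

lemma exists_good_coloring [DecidableEq κ] (c₀ : κ) {d k m Q : ℕ}
    (hV : Fintype.card V = d * Fintype.card κ) (hd : 1 ≤ d) (hQ : 2 * (k * k * d ^ k) ≤ Q)
    (hdeg : 4 * (Fintype.card V * 2 ^ Fintype.card V) < Fintype.card κ ^ m)
    (hanti : 4 * (2 ^ Fintype.card V * 2 ^ Fintype.card V * (Fintype.card κ - 1) ^ (m * m)) <
      Fintype.card κ ^ (m * m)) :
    ∃ f : Sym2 V → κ, #(shortCycleVerts (colorGraph c₀ f) k) ≤ Q ∧
      (∀ v, (colorGraph c₀ f).degree v < m) ∧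
      ∀ A B : Finset V, Disjoint A B → #A = m → #B = m → ¬Anticomplete (colorGraph c₀ f) A B := by
  have hN : 0 < Fintype.card κ ^ Fintype.card (Sym2 V) :=
    pow_pos (Fintype.card_pos_iff.mpr ⟨c₀⟩) _
  have h1 := two_mul_card_many_shortCycleVerts_lt c₀ hV hd hQ
  have h2 := four_mul_lt_of_mul_le (card_filter_exists_le_degree_mul_pow_le c₀ m) hdeg hN
  have h3 := four_mul_lt_of_mul_le (card_filter_exists_anticomplete_mul_pow_le c₀ m) hanti hN
  let bad : Finset (Sym2 V → κ) :=
    ({f | Q < #(shortCycleVerts (colorGraph c₀ f) k)} : Finset (Sym2 V → κ)) ∪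
    ({f | ∃ v, m ≤ (colorGraph c₀ f).degree v} : Finset (Sym2 V → κ)) ∪
    ({f | ∃ A B : Finset V, Disjoint A B ∧ #A = m ∧ #B = m ∧ Anticomplete (colorGraph c₀ f) A B} :
      Finset (Sym2 V → κ))
  have hbad : #bad < #(univ : Finset (Sym2 V → κ)) := by
    rw [card_univ, Fintype.card_fun]
    grw [card_union_le, card_union_le]
    omega
  obtain ⟨f, -, hf⟩ := exists_mem_notMem_of_card_lt_card hbad
  simp only [bad, mem_union, mem_filter, mem_univ, true_and, not_or, not_exists, not_lt, not_and,
    not_le] at hf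
  exact ⟨f, hf.1.1, hf.1.2, hf.2⟩

end Construction

section Parameters

lemma two_mul_sub_one_pow_le {M : ℕ} (hM : 1 ≤ M) : 2 * (M - 1) ^ M ≤ M ^ M := by
  have h := pow_add_mul_le_add_pow (a := M - 1) (b := 1) (Nat.zero_le _) (by omega) M
  rw [Nat.sub_add_cancel hM, mul_one, Nat.cast_id] at h
  have : (M - 1) ^ M ≤ M * (M - 1) ^ (M - 1) := by
    conv_lhs => rw [← Nat.sub_add_cancel hM, pow_succ, mul_comm]
    exact Nat.mul_le_mul_right _ (Nat.sub_le M 1)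
  omega

lemma two_pow_mul_sub_one_pow_le {M t s : ℕ} (hM : 1 ≤ M) (h : M * t ≤ s) :
    2 ^ t * (M - 1) ^ s ≤ M ^ s := by
  obtain ⟨r, rfl⟩ := Nat.exists_eq_add_of_le h
  calc 2 ^ t * (M - 1) ^ (M * t + r) = (2 * (M - 1) ^ M) ^ t * (M - 1) ^ r := by ring
    _ ≤ (M ^ M) ^ t * M ^ r := by gcongr; exacts [two_mul_sub_one_pow_le hM, Nat.sub_le M 1]
    _ = M ^ (M * t + r) := by ring

lemma four_mul_four_pow_mul_sub_one_pow_lt {n M s : ℕ} (hM : 2 ≤ M) (h : M * (2 * n + 3) ≤ s) :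
    4 * (2 ^ n * 2 ^ n * (M - 1) ^ s) < M ^ s := by
  have hpos : 0 < (M - 1) ^ s := pow_pos (by omega) s
  calc 4 * (2 ^ n * 2 ^ n * (M - 1) ^ s) < 2 ^ (2 * n + 3) * (M - 1) ^ s := by
        rw [show 2 ^ (2 * n + 3) = 2 * (4 * (2 ^ n * 2 ^ n)) by ring]
        have : 0 < 2 ^ n * 2 ^ n := by positivity
        nlinarith
    _ ≤ M ^ s := two_pow_mul_sub_one_pow_le (by omega) h

lemma four_mul_mul_two_pow_lt_pow {n e m M : ℕ} (hn : 1 ≤ n) (hM : 2 ^ e ≤ M)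
    (h : 4 * n ≤ e * m) : 4 * (n * 2 ^ n) < M ^ m :=
  calc 4 * (n * 2 ^ n) < 2 ^ 2 * (2 ^ n * 2 ^ n) := by
        have := Nat.lt_two_pow_self (n := n); have := Nat.one_le_two_pow (n := n); nlinarith
    _ = 2 ^ (2 * n + 2) := by ring
    _ ≤ 2 ^ (e * m) := Nat.pow_le_pow_right (by norm_num) (by omega)
    _ = (2 ^ e) ^ m := pow_mul 2 e m
    _ ≤ M ^ m := Nat.pow_le_pow_left hM m

lemma exists_parameters {ε : ℝ} (hε : 0 < ε) (k : ℕ) :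
    ∃ d M m Q : ℕ, 1 ≤ d ∧ 2 ≤ M ∧ 2 * (k * k * d ^ k) ≤ Q ∧
      ((m + Q : ℕ) : ℝ) ≤ ε * (d * M : ℕ) ∧
      4 * (d * M * 2 ^ (d * M)) < M ^ m ∧
      4 * (2 ^ (d * M) * 2 ^ (d * M) * (M - 1) ^ (m * m)) < M ^ (m * m) := by
  -- `d ≥ 16/ε²` gives `m² ≥ 4nM`, `M ≥ 2 ^ ⌈8/ε⌉` gives `M ^ m ≥ 2 ^ (4n)`,
  -- and `M ≥ 2(Q+1)/(εd)` gives `Q + 1 ≤ εn/2`.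
  set d := ⌈16 / ε ^ 2⌉₊
  set Q := 2 * (k * k * d ^ k)
  set e := ⌈8 / ε⌉₊
  set M := max (2 ^ e) ⌈2 * (Q + 1) / (ε * d)⌉₊
  set n := d * M
  set m := ⌈ε * n / 2⌉₊
  have hd : 1 ≤ d := Nat.ceil_pos.mpr (by positivity)
  have hM : 2 ≤ M := le_max_of_le_left
    (Nat.pow_le_pow_right two_pos (Nat.ceil_pos.mpr (by positivity) : 1 ≤ e))
  have hn : 2 ≤ n := hM.trans (Nat.le_mul_of_pos_left M hd)
  have hdR : (1 : ℝ) ≤ d := by exact_mod_cast hd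
  have hnR : (2 : ℝ) ≤ n := by exact_mod_cast hn
  have hnR' : (n : ℝ) = d * M := by push_cast [n]; ring
  have hmR : ε * n / 2 ≤ m := Nat.le_ceil _
  refine ⟨d, M, m, Q, hd, hM, le_rfl, ?_,
    four_mul_mul_two_pow_lt_pow (by omega) (le_max_left _ _) ?_,
    four_mul_four_pow_mul_sub_one_pow_lt hM ?_⟩
  · have hMR : 2 * (Q + 1) / (ε * d) ≤ M :=
      (Nat.le_ceil _).trans (Nat.cast_le.mpr (le_max_right _ _))
    rw [div_le_iff₀ (by positivity)] at hMR
    have : (m : ℝ) < ε * n / 2 + 1 := Nat.ceil_lt_add_one (by positivity)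
    push_cast
    nlinarith
  · have heR : 8 / ε ≤ e := Nat.le_ceil _
    have : (4 * n : ℝ) ≤ e * m :=
      calc (4 * n : ℝ) = 8 / ε * (ε * n / 2) := by field_simp; ring
        _ ≤ e * m := mul_le_mul heR hmR (by positivity) (by positivity)
    exact_mod_cast this
  · have h16 : 16 / ε ^ 2 ≤ d := Nat.le_ceil _
    rw [div_le_iff₀ (by positivity)] at h16
    have : (M * (2 * n + 3) : ℝ) ≤ m * m :=
      calc (M * (2 * n + 3) : ℝ) ≤ 16 * n * M / 4 := by nlinarith
        _ ≤ (d * ε ^ 2) * n * M / 4 := by gcongr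
        _ = (ε * n / 2) * (ε * n / 2) := by rw [hnR']; ring
        _ ≤ m * m := by gcongr
    exact_mod_cast this

end Parameters

lemma exists_coherent_forall_cycleGraph_free {ε : ℝ} (hε : 0 < ε) (k : ℕ) :
    ∃ (n : ℕ) (G : SimpleGraph (Fin n)), Coherent G ε ∧
      ∀ ℓ, 3 ≤ ℓ → ℓ ≤ k → (cycleGraph ℓ).Free G := by
  obtain ⟨d, M, m, Q, hd, hM, hQ, hmQ, hdeg, hanti⟩ := exists_parameters hε k
  have hV : Fintype.card (Fin (d * M)) = d * Fintype.card (Fin M) := by simp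
  obtain ⟨f, hT, hfdeg, hfanti⟩ := exists_good_coloring (⟨0, by omega⟩ : Fin M) hV hd hQ
    (by simpa using hdeg) (by simpa using hanti)
  refine ⟨d * M, isolate _ (shortCycleVerts (colorGraph _ f) k),
    coherent_isolate ?_ hfdeg hfanti ?_,
    fun ℓ h3 hk => cycleGraph_free_isolate_shortCycleVerts _ h3 hk⟩
  · rw [Fintype.card_fin]; nlinarith
  · rw [Fintype.card_fin]
    refine le_trans ?_ hmQ
    push_cast
    gcongr

theorem stmt1 {W : Type*} [Fintype W] (H : SimpleGraph W) (hH : ¬ H.IsAcyclic)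
    (ε : ℝ) (hε : 0 < ε) :
    ∃ (n : ℕ) (G : SimpleGraph (Fin n)), Coherent G ε ∧ ¬ Contains G H := by
  obtain ⟨n, G, hcoh, hfree⟩ := exists_coherent_forall_cycleGraph_free hε (Fintype.card W)
  refine ⟨n, G, hcoh, fun hGH => ?_⟩
  obtain ⟨ℓ, h3, hℓ, hcyc⟩ := exists_cycleGraph_isContained hH
  exact hfree ℓ h3 hℓ (hcyc.trans hGH.isContained)
end

section
/- Let G be an ideal of graphs (a class closed under isomorphism and induced subgraphs). If G has the strong Erdős–Hajnal property, then G has the Erdős–Hajnal property: that is, if there exists ε > 0 such that every graph G ∈ 𝒢 with at least two vertices contains disjoint sets A, B of size at least ε|G| that are either complete or anticomplete to each other, then there exists c > 0 such that every G ∈ 𝒢 has a clique or stable set of size at least |G|^c. -/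
open Finset

open scoped Classical

variable {V : Type*}

/-!
Instead of the size of the largest homogeneous set, track the product `|s| |t|` of a clique `s`
and a stable set `t`. If `A` and `B` are complete to each other, cliques of `A` and of `B` unite to
a clique while the larger of the two stable sets survives, so the product achievable in `A ∪ B`
is at least the sum of those achievable in `A` and in `B`; the anticomplete case is the same in
the complement. With `δ = min ε (1/2)` and `δ ^ c = 1/2`, induction on `n` gives `|s| |t| ≥ n ^ c`,
hence a homogeneous set of size `n ^ (c / 2)`.
-/

namespace SimpleGraph

variable {V W : Type*}

theorem compl_comap_of_embedding (G : SimpleGraph V) (f : W ↪ V) :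
    (G.comap f)ᶜ = Gᶜ.comap f := by
  ext a b
  simp [f.injective.ne_iff]

def HasCliqueStableProduct (G : SimpleGraph V) (C : Finset V) (x : ℝ) : Prop :=
  ∃ s t : Finset V, s ⊆ C ∧ t ⊆ C ∧ G.IsClique ↑s ∧ Gᶜ.IsClique ↑t ∧
    x ≤ (s.card : ℝ) * t.card

namespace HasCliqueStableProduct

variable {G : SimpleGraph V} {A B C : Finset V} {x y : ℝ}

theorem mono {C' : Finset V} {x' : ℝ} (h : G.HasCliqueStableProduct C x) (hC : C ⊆ C')
    (hx : x' ≤ x) : G.HasCliqueStableProduct C' x' := by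
  obtain ⟨s, t, hs, ht, hsc, htc, hst⟩ := h
  exact ⟨s, t, hs.trans hC, ht.trans hC, hsc, htc, hx.trans hst⟩

theorem compl (h : G.HasCliqueStableProduct C x) : Gᶜ.HasCliqueStableProduct C x := by
  obtain ⟨s, t, hs, ht, hsc, htc, hst⟩ := h
  exact ⟨t, s, ht, hs, htc, by rwa [compl_compl], by rwa [mul_comm]⟩

theorem of_comap (f : W ↪ V) (hf : ∀ a, f a ∈ C)
    {D : Finset W} (h : (G.comap f).HasCliqueStableProduct D x) : G.HasCliqueStableProduct C x := by
  obtain ⟨s, t, -, -, hsc, htc, hst⟩ := h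
  have hmap : ∀ u : Finset W, u.map f ⊆ C := fun u v hv => by
    obtain ⟨a, -, rfl⟩ := Finset.mem_map.mp hv
    exact hf a
  refine ⟨s.map f, t.map f, hmap s, hmap t, ?_, ?_, by simpa using hst⟩
  · rw [Finset.coe_map]
    exact hsc.map.mono (map_comap_le f G)
  · rw [Finset.coe_map]
    rw [compl_comap_of_embedding] at htc
    exact htc.map.mono (map_comap_le f Gᶜ)

theorem union_of_completePair [DecidableEq V] (hdisj : Disjoint A B) (hAB : CompletePair G A B)
    (hA : G.HasCliqueStableProduct A x) (hB : G.HasCliqueStableProduct B y) :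
    G.HasCliqueStableProduct (A ∪ B) (x + y) := by
  obtain ⟨sA, tA, hsA, htA, hsAc, htAc, hA⟩ := hA
  obtain ⟨sB, tB, hsB, htB, hsBc, htBc, hB⟩ := hB
  have hclique : G.IsClique ↑(sA ∪ sB) := by
    rw [Finset.coe_union]
    exact Set.pairwise_union.2 ⟨hsAc, hsBc, fun a ha b hb _ =>
      ⟨hAB a (hsA ha) b (hsB hb), (hAB a (hsA ha) b (hsB hb)).symm⟩⟩
  have hcard : ((sA ∪ sB).card : ℝ) = sA.card + sB.card := by
    rw [Finset.card_union_of_disjoint (hdisj.mono hsA hsB), Nat.cast_add]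
  have hsA0 : (0 : ℝ) ≤ sA.card := Nat.cast_nonneg _
  have hsB0 : (0 : ℝ) ≤ sB.card := Nat.cast_nonneg _
  rcases le_total (tA.card : ℝ) tB.card with hle | hle
  · refine ⟨sA ∪ sB, tB, Finset.union_subset_union hsA hsB,
      htB.trans Finset.subset_union_right, hclique, htBc, ?_⟩
    rw [hcard]
    nlinarith [mul_le_mul_of_nonneg_left hle hsA0]
  · refine ⟨sA ∪ sB, tA, Finset.union_subset_union hsA hsB,
      htA.trans Finset.subset_union_left, hclique, htAc, ?_⟩
    rw [hcard]
    nlinarith [mul_le_mul_of_nonneg_left hle hsB0]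

theorem union_of_anticomplete [DecidableEq V] (hdisj : Disjoint A B) (hAB : Anticomplete G A B)
    (hA : G.HasCliqueStableProduct A x) (hB : G.HasCliqueStableProduct B y) :
    G.HasCliqueStableProduct (A ∪ B) (x + y) := by
  have hcompl : CompletePair Gᶜ A B := fun a ha b hb =>
    (compl_adj G a b).2 ⟨fun h => Finset.disjoint_left.1 hdisj ha (h ▸ hb), hAB a ha b hb⟩
  simpa using (union_of_completePair hdisj hcompl hA.compl hB.compl).compl

theorem exists_large_clique_or_stable {y : ℝ} (hy : 0 ≤ y)
    (h : G.HasCliqueStableProduct C (y * y)) :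
    ∃ s : Finset V, (G.IsClique ↑s ∨ Gᶜ.IsClique ↑s) ∧ y ≤ s.card := by
  obtain ⟨s, t, -, -, hsc, htc, hst⟩ := h
  have hs0 : (0 : ℝ) ≤ s.card := Nat.cast_nonneg _
  have ht0 : (0 : ℝ) ≤ t.card := Nat.cast_nonneg _
  rcases le_total (s.card : ℝ) t.card with hle | hle
  · refine ⟨t, Or.inr htc, (mul_self_le_mul_self_iff hy ht0).2 ?_⟩
    nlinarith [mul_le_mul_of_nonneg_right hle ht0]
  · refine ⟨s, Or.inl hsc, (mul_self_le_mul_self_iff hy hs0).2 ?_⟩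
    nlinarith [mul_le_mul_of_nonneg_left hle hs0]

end HasCliqueStableProduct

end SimpleGraph

open SimpleGraph

def IsInducedHereditary (𝒢 : ∀ n : ℕ, SimpleGraph (Fin n) → Prop) : Prop :=
  ∀ (n m : ℕ) (G : SimpleGraph (Fin n)) (H : SimpleGraph (Fin m)), 𝒢 n G → Contains G H → 𝒢 m H

def HasStrongErdosHajnal (𝒢 : ∀ n : ℕ, SimpleGraph (Fin n) → Prop) (ε : ℝ) : Prop :=
  ∀ (n : ℕ) (G : SimpleGraph (Fin n)), 𝒢 n G → 2 ≤ n →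
    ∃ A B : Finset (Fin n), Disjoint A B ∧ ε * n ≤ A.card ∧ ε * n ≤ B.card ∧
      (CompletePair G A B ∨ Anticomplete G A B)

theorem HasStrongErdosHajnal.mono {𝒢 : ∀ n : ℕ, SimpleGraph (Fin n) → Prop} {ε δ : ℝ}
    (h : HasStrongErdosHajnal 𝒢 ε) (hδ : δ ≤ ε) : HasStrongErdosHajnal 𝒢 δ := by
  intro n G hG hn
  obtain ⟨A, B, hAB, hA, hB, hcase⟩ := h n G hG hn
  have hδn : δ * n ≤ ε * n := mul_le_mul_of_nonneg_right hδ (Nat.cast_nonneg n)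
  exact ⟨A, B, hAB, hδn.trans hA, hδn.trans hB, hcase⟩

theorem rpow_le_rpow_add_rpow {δ c n a b : ℝ} (hδ : 0 ≤ δ) (hc : 0 ≤ c) (hδc : 1 / 2 ≤ δ ^ c)
    (hn : 0 ≤ n) (ha : δ * n ≤ a) (hb : δ * n ≤ b) : n ^ c ≤ a ^ c + b ^ c := by
  have hhalf : ∀ x, δ * n ≤ x → n ^ c / 2 ≤ x ^ c := fun x hx => calc
    n ^ c / 2 ≤ δ ^ c * n ^ c := by nlinarith [Real.rpow_nonneg hn c]
    _ = (δ * n) ^ c := (Real.mul_rpow hδ hn).symm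
    _ ≤ x ^ c := Real.rpow_le_rpow (mul_nonneg hδ hn) hx hc
  linarith [hhalf a ha, hhalf b hb]

theorem hasCliqueStableProduct_of_strongErdosHajnal {𝒢 : ∀ n : ℕ, SimpleGraph (Fin n) → Prop}
    (hideal : IsInducedHereditary 𝒢) {δ c : ℝ} (hδ : 0 < δ) (hc : 0 < c) (hδc : 1 / 2 ≤ δ ^ c)
    (hstrong : HasStrongErdosHajnal 𝒢 δ) (n : ℕ) (G : SimpleGraph (Fin n)) (hG : 𝒢 n G) :
    G.HasCliqueStableProduct Finset.univ ((n : ℝ) ^ c) := by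
  induction n using Nat.strong_induction_on with
  | _ n ih =>
  rcases Nat.lt_or_ge n 2 with hn | hn
  · have : Subsingleton (Fin n) := Fin.subsingleton_iff_le_one.2 (by omega)
    refine ⟨Finset.univ, Finset.univ, le_rfl, le_rfl, Set.subsingleton_of_subsingleton.pairwise _,
      Set.subsingleton_of_subsingleton.pairwise _, ?_⟩
    interval_cases n <;> simp [hc.ne']
  obtain ⟨A, B, hAB, hA, hB, hcase⟩ := hstrong n G hG hn
  have hδn : 0 < δ * n := by positivity
  have hApos : 0 < A.card := Nat.cast_pos.1 (hδn.trans_le hA)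
  have hBpos : 0 < B.card := Nat.cast_pos.1 (hδn.trans_le hB)
  have hsum : A.card + B.card ≤ n := by
    simpa [Finset.card_union_of_disjoint hAB] using (A ∪ B).card_le_univ
  have hrestrict : ∀ C : Finset (Fin n), C.card < n →
      G.HasCliqueStableProduct C ((C.card : ℝ) ^ c) := fun C hC =>
    let f := (C.orderEmbOfFin rfl).toEmbedding
    .of_comap f (C.orderEmbOfFin_mem rfl)
      (ih C.card hC (G.comap f) (hideal n C.card G _ hG ⟨f, fun _ _ => Iff.rfl⟩))
  have hunion : G.HasCliqueStableProduct (A ∪ B) ((A.card : ℝ) ^ c + (B.card : ℝ) ^ c) := by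
    have hA' := hrestrict A (by omega)
    have hB' := hrestrict B (by omega)
    rcases hcase with hcomplete | hanti
    · exact .union_of_completePair hAB hcomplete hA' hB'
    · exact .union_of_anticomplete hAB hanti hA' hB'
  exact hunion.mono (Finset.subset_univ _)
    (rpow_le_rpow_add_rpow hδ.le hc.le hδc (Nat.cast_nonneg n) hA hB)

theorem stmt6 (𝒢 : ∀ n : ℕ, SimpleGraph (Fin n) → Prop)
    (hideal : ∀ (n m : ℕ) (G : SimpleGraph (Fin n)) (H : SimpleGraph (Fin m)),
      𝒢 n G → Contains G H → 𝒢 m H)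
    (ε : ℝ) (hε : 0 < ε)
    (hstrong : ∀ (n : ℕ) (G : SimpleGraph (Fin n)), 𝒢 n G → 2 ≤ n →
      ∃ A B : Finset (Fin n), Disjoint A B ∧
        ε * n ≤ A.card ∧ ε * n ≤ B.card ∧
        (CompletePair G A B ∨ Anticomplete G A B)) :
    ∃ c : ℝ, 0 < c ∧ ∀ (n : ℕ) (G : SimpleGraph (Fin n)), 𝒢 n G →
      ∃ s : Finset (Fin n), (G.IsClique ↑s ∨ Gᶜ.IsClique ↑s) ∧
        (n : ℝ) ^ c ≤ (s.card : ℝ) := by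
  set δ := min ε (1 / 2)
  have hδ : 0 < δ := lt_min hε one_half_pos
  have hδ1 : δ < 1 := (min_le_right _ _).trans_lt one_half_lt_one
  set c := Real.logb δ (1 / 2)
  have hc : 0 < c := Real.logb_pos_of_base_lt_one hδ hδ1 one_half_pos one_half_lt_one
  have hδc : δ ^ c = 1 / 2 := Real.rpow_logb hδ hδ1.ne one_half_pos
  refine ⟨c / 2, half_pos hc, fun n G hG => ?_⟩
  have hprod := hasCliqueStableProduct_of_strongErdosHajnal hideal hδ hc hδc.ge
    (HasStrongErdosHajnal.mono hstrong (min_le_left _ _)) n G hG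
  have hsq : (n : ℝ) ^ c = (n : ℝ) ^ (c / 2) * (n : ℝ) ^ (c / 2) := by
    rw [← Real.rpow_add' (Nat.cast_nonneg n) (by linarith), add_halves]
  rw [hsq] at hprod
  exact hprod.exists_large_clique_or_stable (Real.rpow_nonneg (Nat.cast_nonneg n) _)
end

section
/- Let τ ≥ 1 be an integer and 0 < κ ≤ 1. Let B = (B_1, …, B_K) be a blockade in a graph G. Then there is an equicardinal (κ, τ)-support-invariant contraction B' = (B_1', …, B_K') of B whose width is at least κ^{2^K · τ^τ} times the width of B. -/
/-!
The pairs (ordered tree `J` with at most `τ` vertices, support) occurring in the traces of a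
blockade with `K` blocks are determined by the set of blocks met and the parent map of `J`
towards a root, so there are at most `2^K τ^τ` of them. Traces only shrink under contraction.
Hence if `B` is not `(κ, τ)`-support-invariant, some contraction of width at least `κ` times the
width of `B` loses one of these pairs; trimming it to an equicardinal contraction and iterating,
the process stops after at most `2^K τ^τ` steps, each costing a factor `κ` of width.
-/

open Finset

open scoped Classical

variable {V : Type*}

namespace SimpleGraph

variable {W : Type*} {J : SimpleGraph W}

noncomputable def treeParent (J : SimpleGraph W) (r v : W) : W :=
  if h : ∃ p : J.Walk v r, p.IsPath then h.choose.snd else v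

lemma adj_treeParent_of_ne {r v : W} (h : treeParent J r v ≠ v) :
    J.Adj v (treeParent J r v) := by
  unfold treeParent at h ⊢
  split_ifs at h ⊢ with hp
  · generalize hp.choose = p at h ⊢
    cases p with
    | nil => exact absurd rfl h
    | cons hadj q => simpa using hadj
  · exact absurd rfl h

lemma IsTree.treeParent_eq_snd (hJ : J.IsTree) {r v : W} {p : J.Walk v r} (hp : p.IsPath) :
    treeParent J r v = p.snd := by
  have h : ∃ p : J.Walk v r, p.IsPath := ⟨p, hp⟩
  rw [treeParent, dif_pos h, (hJ.existsUnique_path v r).unique h.choose_spec hp]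

lemma IsTree.adj_iff_treeParent (hJ : J.IsTree) (r a b : W) :
    J.Adj a b ↔ a ≠ b ∧ (treeParent J r a = b ∨ treeParent J r b = a) := by
  refine ⟨fun hab => ⟨hab.ne, ?_⟩, ?_⟩
  · obtain ⟨p, hp, -⟩ := hJ.existsUnique_path a r
    by_cases hb : b ∈ p.support
    · exact .inl (hJ.isAcyclic.eq_snd_of_adj_start hp hab hb ▸ hJ.treeParent_eq_snd hp)
    · exact .inr (by simpa using hJ.treeParent_eq_snd (hp.cons hb (h := hab.symm)))
  · rintro ⟨hne, rfl | rfl⟩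
    · exact adj_treeParent_of_ne (Ne.symm hne)
    · exact (adj_treeParent_of_ne hne).symm

lemma IsTree.ext_of_treeParent_eq {J' : SimpleGraph W} (hJ : J.IsTree) (hJ' : J'.IsTree)
    (r : W) (h : treeParent J r = treeParent J' r) : J = J' := by
  ext a b
  rw [hJ.adj_iff_treeParent r, hJ'.adj_iff_treeParent r, h]

end SimpleGraph

section Blockade

variable {K : ℕ} {B B' B'' : Fin K → Finset V}

lemma IsContraction.refl (hB : ∀ i, (B i).Nonempty) : IsContraction B B :=
  fun i => ⟨hB i, subset_rfl⟩

lemma IsContraction.trans (h : IsContraction B' B) (h' : IsContraction B'' B') :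
    IsContraction B'' B :=
  fun i => ⟨(h' i).1, (h' i).2.trans (h i).2⟩

lemma blockWidth_le_card (i : Fin K) : blockWidth B ≤ (B i).card :=
  ciInf_le (OrderBot.bddBelow _) i

lemma exists_card_eq_blockWidth [Nonempty (Fin K)] : ∃ i, (B i).card = blockWidth B :=
  exists_eq_ciInf_of_finite

lemma blockWidth_eq_of_forall_card_eq [Nonempty (Fin K)] {w : ℕ} (h : ∀ i, (B i).card = w) :
    blockWidth B = w := by
  obtain ⟨i, hi⟩ := exists_card_eq_blockWidth (B := B)
  rw [← hi, h]

lemma exists_contraction_card_eq_blockWidth (hB : ∀ i, (B i).Nonempty) :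
    ∃ B', IsContraction B' B ∧ ∀ i, (B' i).card = blockWidth B := by
  choose B' hsub hcard using fun i => exists_subset_card_eq (blockWidth_le_card (B := B) i)
  refine ⟨B', fun i => ⟨?_, hsub i⟩, hcard⟩
  have : Nonempty (Fin K) := ⟨i⟩
  obtain ⟨j, hj⟩ := exists_card_eq_blockWidth (B := B)
  rw [← card_pos, hcard, ← hj]
  exact (hB j).card_pos

end Blockade

section TreeTraces

variable {K : ℕ}

abbrev TraceEntry (τ K : ℕ) : Type :=
  Σ m : Fin (τ + 1), SimpleGraph (Fin m) × (Fin m → Fin K)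

def treeTraces (G : SimpleGraph V) (τ : ℕ) (B : Fin K → Finset V) : Set (TraceEntry τ K) :=
  {x | x.2.1.IsTree ∧ x.2.2 ∈ Trace G B x.2.1}

lemma trace_mono (G : SimpleGraph V) {B' B : Fin K → Finset V} (h : ∀ i, B' i ⊆ B i) {m : ℕ}
    (J : SimpleGraph (Fin m)) : Trace G B' J ⊆ Trace G B J :=
  fun _ ⟨hι, f, hf, hadj⟩ => ⟨hι, f, fun a => h _ (hf a), hadj⟩

lemma treeTraces_mono (G : SimpleGraph V) (τ : ℕ) {B' B : Fin K → Finset V}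
    (h : ∀ i, B' i ⊆ B i) : treeTraces G τ B' ⊆ treeTraces G τ B :=
  fun x hx => ⟨hx.1, trace_mono G h x.2.1 hx.2⟩

/-- The image of the support determines `m` and the strictly monotone support itself; the tree
is recorded by its parent map towards the root `0`, padded by the identity to `Fin τ`. -/
noncomputable def TraceEntry.code {τ : ℕ} (x : TraceEntry τ K) :
    Finset (Fin K) × (Fin τ → Fin τ) :=
  (univ.image x.2.2, fun i =>
    if h : (i : ℕ) < x.1 then
      Fin.castLE (Nat.lt_succ_iff.mp x.1.isLt) (x.2.1.treeParent ⟨0, by omega⟩ ⟨i, h⟩)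
    else i)

lemma TraceEntry.code_injOn (τ K : ℕ) :
    Set.InjOn TraceEntry.code {x : TraceEntry τ K | x.2.1.IsTree ∧ StrictMono x.2.2} := by
  rintro ⟨⟨m, hm⟩, J, ι⟩ ⟨hJ, hι⟩ ⟨⟨m', _⟩, J', ι'⟩ ⟨hJ', hι'⟩ hcode
  obtain ⟨hsupp, hparent⟩ := Prod.ext_iff.mp hcode
  simp only [TraceEntry.code] at hsupp hparent
  obtain rfl : m = m' := by
    simpa [card_image_of_injective _ hι.injective, card_image_of_injective _ hι'.injective]
      using congrArg card hsupp
  obtain rfl : ι = ι' := (hι.range_inj hι').mp <| by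
    simpa using congrArg (fun s : Finset (Fin K) => (s : Set (Fin K))) hsupp
  have hpos : 0 < m := Fin.pos_iff_nonempty.mpr hJ.connected.nonempty
  obtain rfl : J = J' := by
    refine hJ.ext_of_treeParent_eq hJ' ⟨0, hpos⟩ (funext fun v => Fin.ext ?_)
    have := congrArg Fin.val (congrFun hparent ⟨v, by omega⟩)
    simpa [v.isLt] using this
  rfl

lemma ncard_treeTraces_le (G : SimpleGraph V) (τ : ℕ) (B : Fin K → Finset V) :
    (treeTraces G τ B).ncard ≤ 2 ^ K * τ ^ τ := by
  calc (treeTraces G τ B).ncard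
      ≤ (Set.univ : Set (Finset (Fin K) × (Fin τ → Fin τ))).ncard :=
        Set.ncard_le_ncard_of_injOn _ (fun _ _ => Set.mem_univ _)
          ((TraceEntry.code_injOn τ K).mono fun _ hx => And.intro hx.1 hx.2.1)
    _ = 2 ^ K * τ ^ τ := by
        simp [Set.ncard_univ, Nat.card_eq_fintype_card, Fintype.card_finset]

end TreeTraces

section Descent

variable {K : ℕ} (G : SimpleGraph V) (κ : ℝ) (τ : ℕ)

lemma exists_contraction_treeTraces_ssubset (B : Fin K → Finset V)
    (h : ¬ SupportInvariant G B κ τ) :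
    ∃ B', IsContraction B' B ∧ (∀ i, κ * blockWidth B ≤ ((B' i).card : ℝ)) ∧
      treeTraces G τ B' ⊂ treeTraces G τ B := by
  simp only [SupportInvariant, not_forall] at h
  obtain ⟨B', hcon, hwidth, m, hm, J, hJ, hne⟩ := h
  have hsub := trace_mono G (fun i => (hcon i).2) J
  obtain ⟨ι, hι, hι'⟩ := (Set.ssubset_iff_of_subset hsub).mp (hsub.ssubset_of_ne hne)
  refine ⟨B', hcon, hwidth,
    (Set.ssubset_iff_of_subset (treeTraces_mono G τ fun i => (hcon i).2)).mpr
      ⟨⟨⟨m, Nat.lt_succ_of_le hm⟩, J, ι⟩, ⟨hJ, hι⟩, fun h => hι' h.2⟩⟩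

lemma exists_equicardinal_contraction_treeTraces_ssubset [Nonempty (Fin K)]
    (B : Fin K → Finset V) (h : ¬ SupportInvariant G B κ τ) :
    ∃ B', IsContraction B' B ∧ (∀ i j, (B' i).card = (B' j).card) ∧
      κ * blockWidth B ≤ (blockWidth B' : ℝ) ∧ treeTraces G τ B' ⊂ treeTraces G τ B := by
  obtain ⟨B₁, hcon₁, hwidth₁, hlt₁⟩ := exists_contraction_treeTraces_ssubset G κ τ B h
  obtain ⟨B₂, hcon₂, hcard₂⟩ :=
    exists_contraction_card_eq_blockWidth fun i => (hcon₁ i).1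
  obtain ⟨i, hi⟩ := exists_card_eq_blockWidth (B := B₁)
  refine ⟨B₂, hcon₁.trans hcon₂, fun i j => by rw [hcard₂, hcard₂], ?_,
    (treeTraces_mono G τ fun i => (hcon₂ i).2).trans_ssubset hlt₁⟩
  rw [blockWidth_eq_of_forall_card_eq hcard₂, ← hi]
  exact hwidth₁ i

theorem exists_equicardinal_supportInvariant_contraction [Nonempty (Fin K)] (hκ0 : 0 < κ)
    (hκ1 : κ ≤ 1) (B : Fin K → Finset V) (hB : ∀ i, (B i).Nonempty)
    (hBeq : ∀ i j, (B i).card = (B j).card) :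
    ∃ B', IsContraction B' B ∧ (∀ i j, (B' i).card = (B' j).card) ∧
      SupportInvariant G B' κ τ ∧
      κ ^ (treeTraces G τ B).ncard * blockWidth B ≤ (blockWidth B' : ℝ) := by
  induction hn : (treeTraces G τ B).ncard using Nat.strong_induction_on generalizing B with
  | _ n ih =>
  by_cases hSI : SupportInvariant G B κ τ
  · refine ⟨B, .refl hB, hBeq, hSI, ?_⟩
    exact mul_le_of_le_one_left (by positivity) (pow_le_one₀ hκ0.le hκ1)
  obtain ⟨B₁, hcon₁, heq₁, hwidth₁, hlt₁⟩ :=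
    exists_equicardinal_contraction_treeTraces_ssubset G κ τ B hSI
  have hn₁ : (treeTraces G τ B₁).ncard < n := hn ▸ Set.ncard_lt_ncard hlt₁
  obtain ⟨B', hcon, heq, hSI', hwidth⟩ :=
    ih _ hn₁ B₁ (fun i => (hcon₁ i).1) heq₁ rfl
  refine ⟨B', hcon₁.trans hcon, heq, hSI', ?_⟩
  calc κ ^ n * blockWidth B
      ≤ κ ^ (treeTraces G τ B₁).ncard * (κ * blockWidth B) := by
        rw [← mul_assoc, ← pow_succ]
        exact mul_le_mul_of_nonneg_right (pow_le_pow_of_le_one hκ0.le hκ1 hn₁) (by positivity)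
    _ ≤ κ ^ (treeTraces G τ B₁).ncard * blockWidth B₁ :=
        mul_le_mul_of_nonneg_left hwidth₁ (by positivity)
    _ ≤ blockWidth B' := hwidth

end Descent

theorem stmt7_general {V : Type*} (G : SimpleGraph V) (τ : ℕ)
    (κ : ℝ) (hκ0 : 0 < κ) (hκ1 : κ ≤ 1) {K : ℕ} (B : Fin K → Finset V)
    (hB : IsBlockade B) :
    ∃ B' : Fin K → Finset V, IsContraction B' B ∧
      (∀ i j, (B' i).card = (B' j).card) ∧
      SupportInvariant G B' κ τ ∧
      κ ^ (2 ^ K * τ ^ τ) * (blockWidth B : ℝ) ≤ (blockWidth B' : ℝ) := by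
  rcases isEmpty_or_nonempty (Fin K) with hK | hK
  · refine ⟨B, fun i => hK.elim i, fun i => hK.elim i, ?_, by simp [blockWidth]⟩
    intro B' _ _ m _ J hJ
    have : Nonempty (Fin m) := hJ.connected.nonempty
    ext ι
    exact hK.elim (ι (Classical.arbitrary _))
  obtain ⟨B₀, hcon₀, hcard₀⟩ := exists_contraction_card_eq_blockWidth hB.1
  obtain ⟨B', hcon, heq, hSI, hwidth⟩ :=
    exists_equicardinal_supportInvariant_contraction G κ τ hκ0 hκ1 B₀ (fun i => (hcon₀ i).1)
      fun i j => by rw [hcard₀, hcard₀]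
  refine ⟨B', hcon₀.trans hcon, heq, hSI, le_trans ?_ hwidth⟩
  rw [blockWidth_eq_of_forall_card_eq hcard₀]
  have hpow := pow_le_pow_of_le_one hκ0.le hκ1 (ncard_treeTraces_le G τ B₀)
  exact mul_le_mul_of_nonneg_right hpow (by positivity)

theorem stmt7 {V : Type*} (G : SimpleGraph V) (τ : ℕ) (hτ : 1 ≤ τ)
    (κ : ℝ) (hκ0 : 0 < κ) (hκ1 : κ ≤ 1) {K : ℕ} (B : Fin K → Finset V)
    (hB : IsBlockade B) :
    ∃ B' : Fin K → Finset V, IsContraction B' B ∧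
      (∀ i j, (B' i).card = (B' j).card) ∧
      SupportInvariant G B' κ τ ∧
      κ ^ (2 ^ K * τ ^ τ) * (blockWidth B : ℝ) ≤ (blockWidth B' : ℝ) :=
  stmt7_general G τ κ hκ0 hκ1 B hB
end

section
/- For all integers k ≥ 0 and τ ≥ 1 there exists an integer K ≥ 0 with the following property: every blockade B = (B_1, …, B_K) of length K in any graph has a sub-blockade of length k which is τ-support-uniform. -/
open Finset

open scoped Classical

variable {V : Type*}

open scoped Classical

theorem myRamsey (α : Type*) [LinearOrder α] (C : Type*) [Fintype C] [Nonempty C] :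
    ∀ r k : ℕ, ∃ n : ℕ, ∀ (c : Finset α → C) (A : Finset α), n ≤ A.card →
      ∃ S : Finset α, S ⊆ A ∧ S.card = k ∧ ∃ b : C, ∀ T ⊆ S, T.card = r → c T = b := by
  intro r
  induction r with
  | zero =>
    intro k
    refine ⟨k, fun c A hA => ?_⟩
    obtain ⟨S, hSA, hS⟩ := Finset.exists_subset_card_eq hA
    refine ⟨S, hSA, hS, c ∅, fun T _ hT => ?_⟩
    rw [Finset.card_eq_zero.mp hT]
  | succ r IH =>
    have key : ∀ m : ℕ, ∃ n : ℕ, ∀ (c : Finset α → C) (A : Finset α), n ≤ A.card →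
        ∃ xs : Finset α, xs ⊆ A ∧ xs.card = m ∧ ∃ d : α → C,
          ∀ T, T ⊆ xs → ∀ hT : T.Nonempty, T.card = r + 1 → c T = d (T.min' hT) := by
      intro m
      induction m with
      | zero =>
        refine ⟨0, fun c A _ => ⟨∅, empty_subset _, card_empty, Classical.arbitrary _,
          fun T hT hTne hTc => absurd (subset_empty.mp hT) ?_⟩⟩
        rintro rfl
        simp at hTc
      | succ m IHm =>
        obtain ⟨n', hn'⟩ := IHm
        obtain ⟨N, hN⟩ := IH n'
        refine ⟨N + 1, fun c A hA => ?_⟩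
        have hAne : A.Nonempty := Finset.card_pos.mp (by omega)
        set x := A.min' hAne with hx
        have hxA : x ∈ A := A.min'_mem hAne
        have hA0 : N ≤ (A.erase x).card := by
          rw [Finset.card_erase_of_mem hxA]; omega
        obtain ⟨S, hSA0, hScard, b, hb⟩ := hN (fun T => c (insert x T)) (A.erase x) hA0
        obtain ⟨xs', hxs'S, hxs'card, d', hd'⟩ := hn' c S (le_of_eq hScard.symm)
        have hxnot : x ∉ xs' := fun h => (Finset.mem_erase.mp (hSA0 (hxs'S h))).1 rfl
        refine ⟨insert x xs', ?_, ?_, fun y => if y = x then b else d' y, ?_⟩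
        · intro y hy
          rcases Finset.mem_insert.mp hy with rfl | hy
          · exact hxA
          · exact (Finset.erase_subset _ _) (hSA0 (hxs'S hy))
        · rw [Finset.card_insert_of_notMem hxnot, hxs'card]
        · intro T hT hTne hTc
          by_cases hxT : x ∈ T
          · have hmin : T.min' hTne = x := by
              apply le_antisymm (T.min'_le x hxT)
              refine A.min'_le _ ?_
              have := hT (T.min'_mem hTne)
              rcases Finset.mem_insert.mp this with h | h
              · rw [h]; exact hxA
              · exact (Finset.erase_subset _ _) (hSA0 (hxs'S h))
            rw [hmin]
            show c T = if x = x then b else d' x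
            rw [if_pos rfl]
            have hTe : T.erase x ⊆ xs' := by
              intro y hy
              have := Finset.mem_erase.mp hy
              rcases Finset.mem_insert.mp (hT this.2) with h | h
              · exact absurd h this.1
              · exact h
            have : c (insert x (T.erase x)) = b := by
              apply hb _ (hTe.trans hxs'S)
              rw [Finset.card_erase_of_mem hxT, hTc]
              omega
            rwa [Finset.insert_erase hxT] at this
          · have hTxs' : T ⊆ xs' := fun y hy => by
              rcases Finset.mem_insert.mp (hT hy) with rfl | h
              · exact absurd hy hxT
              · exact h
            rw [hd' T hTxs' hTne hTc]
            show d' _ = if T.min' hTne = x then b else d' (T.min' hTne)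
            rw [if_neg (fun h : T.min' hTne = x => hxT (h ▸ T.min'_mem hTne))]
    intro k
    obtain ⟨n, hn⟩ := key (Fintype.card C * k + 1)
    refine ⟨n, fun c A hA => ?_⟩
    obtain ⟨xs, hxsA, hxscard, d, hd⟩ := hn c A hA
    obtain ⟨y, -, hy⟩ := Finset.exists_lt_card_fiber_of_mul_lt_card_of_maps_to
      (f := d) (t := (Finset.univ : Finset C)) (n := k) (fun a _ => Finset.mem_univ _)
      (by rw [hxscard, Finset.card_univ]; omega)
    obtain ⟨S, hSf, hScard⟩ := Finset.exists_subset_card_eq (le_of_lt hy)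
    refine ⟨S, (hSf.trans (Finset.filter_subset _ _)).trans hxsA, hScard, y, fun T hTS hTc => ?_⟩
    have hTne : T.Nonempty := Finset.card_pos.mp (by omega)
    rw [hd T (hTS.trans (hSf.trans (Finset.filter_subset _ _))) hTne hTc]
    have := hSf (hTS (T.min'_mem hTne))
    exact (Finset.mem_filter.mp this).2
theorem stmt8 (k τ : ℕ) (hτ : 1 ≤ τ) :
    ∃ K : ℕ, ∀ (V : Type) (G : SimpleGraph V) (B : Fin K → Finset V),
      IsBlockade B →
      ∃ σ : Fin k → Fin K, StrictMono σ ∧ SupportUniform G (B ∘ σ) τ := by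
  classical
  obtain ⟨K, hK⟩ := myRamsey ℕ (∀ m : Fin (τ + 1), SimpleGraph (Fin (m : ℕ)) → Bool) τ (k + τ)
  refine ⟨K, fun V G B _hB => ?_⟩
  set c : Finset ℕ → ∀ m : Fin (τ + 1), SimpleGraph (Fin (m : ℕ)) → Bool :=
    fun T m J => decide (∀ g : Fin τ → Fin K, StrictMono g → (∀ i, ((g i : ℕ)) ∈ T) →
      RainbowCopy G B J (g ∘ Fin.castLE (Nat.lt_succ_iff.mp m.2))) with hc
  obtain ⟨S, hS, hScard, b, hb⟩ := hK c (Finset.range K) (by simp)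
  have hmemK : ∀ j : Fin (k + τ), S.orderEmbOfFin hScard j < K := by
    intro j
    have := hS (S.orderEmbOfFin_mem hScard j)
    simpa using this
  set F : Fin (k + τ) → Fin K := fun j => ⟨S.orderEmbOfFin hScard j, hmemK j⟩ with hF
  have hFmono : StrictMono F := by
    intro i j hij
    exact Fin.mk_lt_mk.mpr ((S.orderEmbOfFin hScard).strictMono hij)
  set σ : Fin k → Fin K := fun i => F (Fin.castLE (by omega) i) with hσdef
  have hσ : StrictMono σ := by
    intro i j hij
    exact hFmono (by rw [Fin.lt_def]; exact hij)
  have claim : ∀ (m : Fin (τ + 1)) (J : SimpleGraph (Fin (m : ℕ)))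
      (ι : Fin (m : ℕ) → Fin k), StrictMono ι →
      (RainbowCopy G B J (σ ∘ ι) ↔ b m J = true) := by
    intro m J ι hι
    have hm : (m : ℕ) ≤ τ := Nat.lt_succ_iff.mp m.2
    have hmk : (m : ℕ) ≤ k := by
      have := Fintype.card_le_of_injective ι hι.injective
      simpa using this
    set g₀ : Fin τ → Fin K := fun i =>
      if h : (i : ℕ) < (m : ℕ) then σ (ι ⟨i, h⟩)
      else F ⟨k + ((i : ℕ) - (m : ℕ)), by omega⟩ with hg₀
    have hg₀val : ∀ i, ∃ j : Fin (k + τ), g₀ i = F j := by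
      intro i
      by_cases h : (i : ℕ) < (m : ℕ)
      · refine ⟨Fin.castLE (by omega) (ι ⟨i, h⟩), ?_⟩
        simp only [hg₀]
        rw [dif_pos h]
      · refine ⟨⟨k + ((i : ℕ) - (m : ℕ)), by omega⟩, ?_⟩
        simp only [hg₀]
        rw [dif_neg h]
    have hg₀mono : StrictMono g₀ := by
      intro i j hij
      have hij' : (i : ℕ) < (j : ℕ) := hij
      simp only [hg₀]
      by_cases hi : (i : ℕ) < (m : ℕ) <;> by_cases hj : (j : ℕ) < (m : ℕ)
      · rw [dif_pos hi, dif_pos hj]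
        exact hσ (hι hij')
      · rw [dif_pos hi, dif_neg hj]
        apply hFmono
        simp only [hσdef, Fin.lt_def, Fin.coe_castLE]
        have := (ι ⟨i, hi⟩).isLt
        omega
      · omega
      · rw [dif_neg hi, dif_neg hj]
        apply hFmono
        simp only [Fin.lt_def]
        omega
    set T' : Finset (Fin K) := Finset.image g₀ Finset.univ with hT'
    set T : Finset ℕ := Finset.image (fun i : Fin K => (i : ℕ)) T' with hTdef
    have hmemT : ∀ x : Fin K, (x : ℕ) ∈ T ↔ x ∈ T' := by
      intro x
      simp only [hTdef, Finset.mem_image]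
      constructor
      · rintro ⟨y, hy, hxy⟩
        rwa [← Fin.val_injective hxy]
      · exact fun hx => ⟨x, hx, rfl⟩
    have hTS : T ⊆ S := by
      intro x hx
      simp only [hTdef, hT', Finset.mem_image] at hx
      obtain ⟨y, ⟨i, _, rfl⟩, rfl⟩ := hx
      obtain ⟨j, hj⟩ := hg₀val i
      rw [hj]
      exact S.orderEmbOfFin_mem hScard j
    have hT'card : T'.card = τ := by
      rw [hT', Finset.card_image_of_injective _ hg₀mono.injective, Finset.card_univ,
        Fintype.card_fin]
    have hTcard : T.card = τ := by
      rw [hTdef, Finset.card_image_of_injective _ Fin.val_injective, hT'card]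
    have hcT : c T = b := hb T hTS hTcard
    have hcomp : g₀ ∘ Fin.castLE hm = σ ∘ ι := by
      funext i
      have hi : ((Fin.castLE hm i : Fin τ) : ℕ) < (m : ℕ) := i.isLt
      simp only [Function.comp, hg₀]
      rw [dif_pos hi]
      rfl
    have huniq : ∀ g : Fin τ → Fin K, StrictMono g → (∀ i, ((g i : ℕ)) ∈ T) → g = g₀ := by
      intro g hg hgT
      have h1 : g = T'.orderEmbOfFin hT'card :=
        Finset.orderEmbOfFin_unique hT'card (fun i => (hmemT _).mp (hgT i)) hg
      have h2 : g₀ = T'.orderEmbOfFin hT'card :=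
        Finset.orderEmbOfFin_unique hT'card
          (fun i => Finset.mem_image_of_mem _ (Finset.mem_univ i)) hg₀mono
      rw [h1, h2]
    have hcTmJ : c T m J = b m J := by rw [hcT]
    rw [hc] at hcTmJ
    simp only at hcTmJ
    constructor
    · intro hrc
      rw [← hcTmJ]
      rw [decide_eq_true_iff]
      intro g hg hgT
      rw [huniq g hg hgT]
      have : g₀ ∘ Fin.castLE (Nat.lt_succ_iff.mp m.2) = σ ∘ ι := hcomp
      rw [this]
      exact hrc
    · intro hbt
      rw [← hcTmJ, decide_eq_true_iff] at hbt
      have := hbt g₀ hg₀mono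
        (fun i => (hmemT _).mpr (Finset.mem_image_of_mem _ (Finset.mem_univ i)))
      rwa [hcomp] at this
  refine ⟨σ, hσ, ?_⟩
  intro m hm J _hJ
  have hmlt : m < τ + 1 := Nat.lt_succ_of_le hm
  by_cases hbv : b ⟨m, hmlt⟩ J = true
  · right
    ext ι
    simp only [Trace, Set.mem_setOf_eq]
    constructor
    · exact fun h => h.1
    · intro hι
      obtain ⟨-, f, hf1, hf2⟩ := (claim ⟨m, hmlt⟩ J ι hι).mpr hbv
      exact ⟨hι, f, hf1, hf2⟩
  · left
    ext ι
    simp only [Trace, Set.mem_setOf_eq, Set.mem_empty_iff_false, iff_false]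
    rintro ⟨hι, f, hf1, hf2⟩
    exact hbv ((claim ⟨m, hmlt⟩ J ι hι).mp ⟨hσ.comp hι, f, hf1, hf2⟩)
end

section
/- Let C be a finite set, and for each element v of a finite set Z, let M(v) ⊆ C be nonempty and let I(v) ⊆ M(v) satisfy |I(v)| < |M(v)|/4. Let Z be partitioned into two parts Z_1 and Z_2. Then there is a linear order of C such that for each i ∈ {1,2}, at least half the elements v of Z_i have the property that the first element of M(v) under the order does not lie in I(v). -/
open Finset

open scoped Classical

variable {V : Type*}

set_option linter.unusedSectionVars false
set_option linter.unusedVariables false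

namespace Stmt17Aux
variable {C : Type} [Fintype C]

noncomputable def emb (C : Type) [Fintype C] : C ↪ ℕ :=
  (Fintype.equivFin C).toEmbedding.trans (Fin.valEmbedding)

noncomputable def rk (σ : Equiv.Perm C) (c : C) : ℕ := emb C (σ c)

lemma rk_inj (σ : Equiv.Perm C) : Function.Injective (rk σ) := by
  intro a b h
  exact σ.injective ((emb C).injective h)

def isMin (σ : Equiv.Perm C) (M : Finset C) (c : C) : Prop :=
  c ∈ M ∧ ∀ c' ∈ M, rk σ c ≤ rk σ c'

lemma isMin_unique {σ : Equiv.Perm C} {M : Finset C} {c c' : C}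
    (h : isMin σ M c) (h' : isMin σ M c') : c = c' :=
  rk_inj σ (le_antisymm (h.2 c' h'.1) (h'.2 c h.1))

lemma exists_isMin (σ : Equiv.Perm C) {M : Finset C} (hM : M.Nonempty) :
    ∃ c, isMin σ M c := by
  obtain ⟨c, hc, hmin⟩ := M.exists_min_image (rk σ) hM
  exact ⟨c, hc, hmin⟩

lemma swap_mem {M : Finset C} {c c' : C} (hc : c ∈ M) (hc' : c' ∈ M)
    {x : C} (hx : x ∈ M) : Equiv.swap c c' x ∈ M := by
  rcases eq_or_ne x c with rfl | h1
  · simpa [Equiv.swap_apply_left] using hc'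
  rcases eq_or_ne x c' with rfl | h2
  · simpa [Equiv.swap_apply_right] using hc
  · simpa [Equiv.swap_apply_of_ne_of_ne h1 h2] using hx

lemma isMin_swap {σ : Equiv.Perm C} {M : Finset C} {c c' : C}
    (hc : c ∈ M) (hc' : c' ∈ M) :
    isMin (σ * Equiv.swap c c') M c ↔ isMin σ M c' := by
  have hrk : ∀ x, rk (σ * Equiv.swap c c') x = rk σ (Equiv.swap c c' x) := fun x => rfl
  constructor
  · rintro ⟨-, h⟩
    refine ⟨hc', fun y hy => ?_⟩
    have := h (Equiv.swap c c' y) (swap_mem hc hc' hy)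
    simpa [hrk, Equiv.swap_apply_left, Equiv.swap_apply_self] using this
  · rintro ⟨-, h⟩
    refine ⟨hc, fun y hy => ?_⟩
    have := h (Equiv.swap c c' y) (swap_mem hc hc' hy)
    simpa [hrk, Equiv.swap_apply_left] using this

lemma count_min_const {M : Finset C} {c c' : C} (hc : c ∈ M) (hc' : c' ∈ M) :
    (univ.filter (fun σ : Equiv.Perm C => isMin σ M c)).card
      = (univ.filter (fun σ : Equiv.Perm C => isMin σ M c')).card := by
  apply Finset.card_bij' (fun σ _ => σ * Equiv.swap c c')
    (fun σ _ => σ * Equiv.swap c c')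
  · intro σ hσ
    simp only [mem_filter, mem_univ, true_and] at hσ ⊢
    have := (isMin_swap hc' hc (σ := σ)).mpr hσ
    rwa [Equiv.swap_comm] at this
  · intro σ hσ
    simp only [mem_filter, mem_univ, true_and] at hσ ⊢
    exact (isMin_swap hc hc').mpr hσ
  · intro σ _; simp [mul_assoc]
  · intro σ _; simp [mul_assoc]

/-- The key counting identity. -/
lemma count_bad (M I : Finset C) (hM : M.Nonempty) (hIM : I ⊆ M) :
    M.card * (univ.filter (fun σ : Equiv.Perm C => ∃ c ∈ I, isMin σ M c)).card
      = I.card * Fintype.card (Equiv.Perm C) := by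
  set g : Equiv.Perm C → C := fun σ => Classical.choose (exists_isMin σ hM) with hg
  have hgspec : ∀ σ, isMin σ M (g σ) := fun σ => Classical.choose_spec (exists_isMin σ hM)
  have hfiber : ∀ c, (univ.filter (fun σ : Equiv.Perm C => g σ = c))
      = (univ.filter (fun σ : Equiv.Perm C => isMin σ M c)) := by
    intro c
    ext σ
    simp only [mem_filter, mem_univ, true_and]
    constructor
    · rintro rfl; exact hgspec σ
    · intro h; exact isMin_unique (hgspec σ) h
  obtain ⟨c0, hc0⟩ := hM
  set k := (univ.filter (fun σ : Equiv.Perm C => isMin σ M c0)).card with hk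
  have hconst : ∀ c ∈ M, (univ.filter (fun σ : Equiv.Perm C => isMin σ M c)).card = k :=
    fun c hc => count_min_const hc hc0
  -- total count
  have htot : Fintype.card (Equiv.Perm C) = M.card * k := by
    have := Finset.card_eq_sum_card_fiberwise
      (f := g) (s := (univ : Finset (Equiv.Perm C))) (t := M)
      (fun σ _ => (hgspec σ).1)
    rw [← Fintype.card, Fintype.card] at *
    rw [this]
    rw [Finset.sum_congr rfl (fun c hc => by rw [hfiber c, hconst c hc])]
    simp [mul_comm]
  -- bad count
  have hbad : (univ.filter (fun σ : Equiv.Perm C => ∃ c ∈ I, isMin σ M c)).card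
      = I.card * k := by
    have hmem : ∀ σ ∈ (univ.filter (fun σ : Equiv.Perm C => ∃ c ∈ I, isMin σ M c)),
        g σ ∈ I := by
      intro σ hσ
      simp only [mem_filter, mem_univ, true_and] at hσ
      obtain ⟨c, hcI, hc⟩ := hσ
      rwa [isMin_unique (hgspec σ) hc]
    have := Finset.card_eq_sum_card_fiberwise (f := g)
      (s := univ.filter (fun σ : Equiv.Perm C => ∃ c ∈ I, isMin σ M c)) (t := I) hmem
    rw [this]
    have hfib2 : ∀ c ∈ I,
        ((univ.filter (fun σ : Equiv.Perm C => ∃ c ∈ I, isMin σ M c)).filter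
          (fun σ => g σ = c)).card = k := by
      intro c hc
      have : ((univ.filter (fun σ : Equiv.Perm C => ∃ c ∈ I, isMin σ M c)).filter
          (fun σ => g σ = c)) = univ.filter (fun σ : Equiv.Perm C => g σ = c) := by
        ext σ
        simp only [mem_filter, mem_univ, true_and]
        constructor
        · rintro ⟨-, h⟩; exact h
        · rintro rfl
          exact ⟨⟨g σ, hc, hgspec σ⟩, rfl⟩
      rw [this, hfiber c, hconst c (hIM hc)]
    rw [Finset.sum_congr rfl hfib2]
    simp [mul_comm]
  rw [hbad, htot]; ring

end Stmt17Aux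

open Stmt17Aux in
theorem stmt17 {C : Type} [Fintype C] {α : Type} (Z1 Z2 : Finset α)
    (hZ : Disjoint Z1 Z2) (M I : α → Finset C)
    (hM : ∀ v ∈ Z1 ∪ Z2, (M v).Nonempty)
    (hIM : ∀ v ∈ Z1 ∪ Z2, I v ⊆ M v)
    (hI : ∀ v ∈ Z1 ∪ Z2, ((I v).card : ℝ) < (M v).card / 4) :
    ∃ π : C ↪ ℕ,
      Z1.card ≤ 2 * (Z1.filter fun v =>
        ∃ c ∈ M v, c ∉ I v ∧ ∀ c' ∈ M v, π c ≤ π c').card ∧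
      Z2.card ≤ 2 * (Z2.filter fun v =>
        ∃ c ∈ M v, c ∉ I v ∧ ∀ c' ∈ M v, π c ≤ π c').card := by
  classical
  set N := Fintype.card (Equiv.Perm C) with hN
  have hNpos : 0 < N := Fintype.card_pos
  set badP : Equiv.Perm C → α → Prop :=
    fun σ v => ∃ c ∈ I v, isMin σ (M v) c with hbadP
  -- per-vertex bad count bound
  have hkey : ∀ v ∈ Z1 ∪ Z2,
      4 * (univ.filter (fun σ : Equiv.Perm C => badP σ v)).card + 1 ≤ N := by
    intro v hv
    have hcount := count_bad (M v) (I v) (hM v hv) (hIM v hv)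
    have hMcard : 4 * (I v).card < (M v).card := by
      have h4 : (4 * (I v).card : ℝ) < (M v).card := by
        have := hI v hv; linarith
      exact_mod_cast h4
    set B := (univ.filter (fun σ : Equiv.Perm C => badP σ v)).card with hB
    have h1 : (M v).card * (4 * B) < (M v).card * N := by
      calc (M v).card * (4 * B) = 4 * ((M v).card * B) := by ring
        _ = 4 * ((I v).card * N) := by rw [hcount]
        _ = (4 * (I v).card) * N := by ring
        _ < (M v).card * N := by
            exact Nat.mul_lt_mul_of_lt_of_le hMcard le_rfl hNpos
    have := Nat.lt_of_mul_lt_mul_left h1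
    omega
  -- the two sums
  have hsum : ∀ Z : Finset α, Z ⊆ Z1 ∪ Z2 →
      4 * (∑ σ : Equiv.Perm C, (Z.filter (badP σ)).card) ≤ Z.card * (N - 1) := by
    intro Z hZsub
    have hswap : (∑ σ : Equiv.Perm C, (Z.filter (badP σ)).card)
        = ∑ v ∈ Z, (univ.filter (fun σ : Equiv.Perm C => badP σ v)).card := by
      simp_rw [Finset.card_filter]
      exact Finset.sum_comm
    rw [hswap, Finset.mul_sum]
    calc ∑ v ∈ Z, 4 * (univ.filter (fun σ : Equiv.Perm C => badP σ v)).card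
        ≤ ∑ _v ∈ Z, (N - 1) := by
          refine Finset.sum_le_sum fun v hv => ?_
          have := hkey v (hZsub hv); omega
      _ = Z.card * (N - 1) := by simp [mul_comm]
  -- Markov bound on failing permutations
  have hfail : ∀ Z : Finset α, Z ⊆ Z1 ∪ Z2 →
      2 * (univ.filter (fun σ : Equiv.Perm C =>
        Z.card + 1 ≤ 2 * (Z.filter (badP σ)).card)).card < N := by
    intro Z hZsub
    set F := univ.filter (fun σ : Equiv.Perm C =>
        Z.card + 1 ≤ 2 * (Z.filter (badP σ)).card) with hF
    have hmarkov : (Z.card + 1) * F.card ≤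
        2 * ∑ σ : Equiv.Perm C, (Z.filter (badP σ)).card := by
      calc (Z.card + 1) * F.card = ∑ _σ ∈ F, (Z.card + 1) := by simp [mul_comm]
        _ ≤ ∑ σ ∈ F, 2 * (Z.filter (badP σ)).card := by
            refine Finset.sum_le_sum fun σ hσ => ?_
            simp only [hF, mem_filter] at hσ; exact hσ.2
        _ ≤ ∑ σ : Equiv.Perm C, 2 * (Z.filter (badP σ)).card :=
            Finset.sum_le_sum_of_subset (Finset.subset_univ F)
        _ = 2 * ∑ σ : Equiv.Perm C, (Z.filter (badP σ)).card := by
            rw [Finset.mul_sum]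
    have hs := hsum Z hZsub
    have h2 : (Z.card + 1) * (2 * F.card) ≤ Z.card * (N - 1) := by
      calc (Z.card + 1) * (2 * F.card) = 2 * ((Z.card + 1) * F.card) := by ring
        _ ≤ 2 * (2 * ∑ σ : Equiv.Perm C, (Z.filter (badP σ)).card) := by omega
        _ ≤ Z.card * (N - 1) := by omega
    have h3 : (Z.card + 1) * (2 * F.card) < (Z.card + 1) * N := by
      have : Z.card * (N - 1) < (Z.card + 1) * N := by
        have : Z.card * (N - 1) ≤ Z.card * N := Nat.mul_le_mul_left _ (by omega)
        nlinarith
      omega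
    exact Nat.lt_of_mul_lt_mul_left h3
  -- find a good permutation
  obtain ⟨σ, hσ1, hσ2⟩ : ∃ σ : Equiv.Perm C,
      2 * (Z1.filter (badP σ)).card ≤ Z1.card ∧
      2 * (Z2.filter (badP σ)).card ≤ Z2.card := by
    by_contra hcon
    push_neg at hcon
    set F1 := univ.filter (fun σ : Equiv.Perm C =>
        Z1.card + 1 ≤ 2 * (Z1.filter (badP σ)).card) with hF1
    set F2 := univ.filter (fun σ : Equiv.Perm C =>
        Z2.card + 1 ≤ 2 * (Z2.filter (badP σ)).card) with hF2
    have hunion : (univ : Finset (Equiv.Perm C)) ⊆ F1 ∪ F2 := by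
      intro σ _
      rcases Nat.lt_or_ge Z1.card (2 * (Z1.filter (badP σ)).card) with h | h
      · exact Finset.mem_union_left _ (by simp [hF1]; omega)
      · have := hcon σ h
        exact Finset.mem_union_right _ (by simp [hF2]; omega)
    have hcard : N ≤ F1.card + F2.card := by
      calc N = (univ : Finset (Equiv.Perm C)).card := by simp [hN]
        _ ≤ (F1 ∪ F2).card := Finset.card_le_card hunion
        _ ≤ F1.card + F2.card := Finset.card_union_le _ _
    have h1 : 2 * F1.card < N := hfail Z1 Finset.subset_union_left
    have h2 : 2 * F2.card < N := hfail Z2 Finset.subset_union_right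
    omega
  have hfinal : ∀ Z : Finset α, Z ⊆ Z1 ∪ Z2 →
      2 * (Z.filter (badP σ)).card ≤ Z.card →
      Z.card ≤ 2 * (Z.filter fun v =>
        ∃ c ∈ M v, c ∉ I v ∧ ∀ c' ∈ M v,
          (σ.toEmbedding.trans (emb C)) c ≤ (σ.toEmbedding.trans (emb C)) c').card := by
    intro Z hZsub hle
    have hgoodeq : (Z.filter fun v =>
        ∃ c ∈ M v, c ∉ I v ∧ ∀ c' ∈ M v,
          (σ.toEmbedding.trans (emb C)) c ≤ (σ.toEmbedding.trans (emb C)) c')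
        = Z.filter (fun v => ¬ badP σ v) := by
      refine Finset.filter_congr fun v hv => ?_
      have hvU := hZsub hv
      constructor
      · rintro ⟨c, hcM, hcI, hmin⟩ ⟨c', hc'I, hc'min⟩
        have hcmin : isMin σ (M v) c := ⟨hcM, hmin⟩
        exact hcI (isMin_unique hcmin hc'min ▸ hc'I)
      · intro hnb
        obtain ⟨c, hc⟩ := exists_isMin σ (hM v hvU)
        refine ⟨c, hc.1, fun hcI => hnb ⟨c, hcI, hc⟩, hc.2⟩
    rw [hgoodeq]
    have := Finset.card_filter_add_card_filter_not (s := Z) (p := badP σ)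
    omega
  exact ⟨σ.toEmbedding.trans (emb C),
    hfinal Z1 Finset.subset_union_left hσ1,
    hfinal Z2 Finset.subset_union_right hσ2⟩
end
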